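/- arXiv:2408.03692 — 2 statements merged into one kernel-verified Lean document; each statement's English description precedes it below -/
import Mathlib

section
/- Lifted MDP equivalence of Q-values: let φ : Ŝ → S be a surjection, and suppose the lifted transition kernel satisfies P̂(ŝ' | ŝ, a) summed over all ŝ' with φ(ŝ') = s' equals P(s' | φ(ŝ), a), and r̂(ŝ, a) = r(φ(ŝ), a). If Q : S × A → ℝ is the unique fixed point of the Bellman optimality operator for (S, P, r, γ) and Q̂ is the unique fixed point for (Ŝ, P̂, r̂, γ), then Q̂(ŝ, a) = Q(φ(ŝ), a) for all ŝ, a. -/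
theorem stmt_10 {S Shat A : Type} [Fintype S] [Fintype Shat] [Fintype A]
    [Nonempty S] [Nonempty Shat] [Nonempty A] [DecidableEq S]
    (φ : Shat → S) (hφ : Function.Surjective φ)
    (γ : ℝ) (hγ0 : 0 ≤ γ) (hγ1 : γ < 1)
    (P : S × A → S → ℝ) (Phat : Shat × A → Shat → ℝ)
    (r : S × A → ℝ) (rhat : Shat × A → ℝ)
    (hP0 : ∀ sa s', 0 ≤ P sa s') (hP1 : ∀ sa, ∑ s', P sa s' = 1)
    (hPhat0 : ∀ sa s', 0 ≤ Phat sa s') (hPhat1 : ∀ sa, ∑ s', Phat sa s' = 1)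
    (hlift : ∀ (shat : Shat) (a : A) (s' : S),
      ∑ shat' ∈ Finset.univ.filter (fun shat' => φ shat' = s'), Phat (shat, a) shat' =
        P (φ shat, a) s')
    (hr : ∀ (shat : Shat) (a : A), rhat (shat, a) = r (φ shat, a))
    (Q : S × A → ℝ) (Qhat : Shat × A → ℝ)
    (hQ : ∀ s a, Q (s, a) = r (s, a) + γ * ∑ s', P (s, a) s' *
      Finset.univ.sup' Finset.univ_nonempty (fun a' => Q (s', a')))
    (hQuniq : ∀ Q' : S × A → ℝ,
      (∀ s a, Q' (s, a) = r (s, a) + γ * ∑ s', P (s, a) s' *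
        Finset.univ.sup' Finset.univ_nonempty (fun a' => Q' (s', a'))) → Q' = Q)
    (hQhat : ∀ shat a, Qhat (shat, a) = rhat (shat, a) + γ * ∑ shat', Phat (shat, a) shat' *
      Finset.univ.sup' Finset.univ_nonempty (fun a' => Qhat (shat', a')))
    (hQhatuniq : ∀ Q' : Shat × A → ℝ,
      (∀ shat a, Q' (shat, a) = rhat (shat, a) + γ * ∑ shat', Phat (shat, a) shat' *
        Finset.univ.sup' Finset.univ_nonempty (fun a' => Q' (shat', a'))) → Q' = Qhat) :
    ∀ (shat : Shat) (a : A), Qhat (shat, a) = Q (φ shat, a) := by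
  have key : (fun p : Shat × A => Q (φ p.1, p.2)) = Qhat := by
    apply hQhatuniq
    intro shat a
    simp only
    rw [hr, hQ]
    congr 1
    congr 1
    rw [← Finset.sum_fiberwise (Finset.univ) φ
      (fun shat' => Phat (shat, a) shat' *
        Finset.univ.sup' Finset.univ_nonempty (fun a' => Q (φ shat', a')))]
    apply Finset.sum_congr rfl
    intro s' _
    rw [← hlift shat a s', Finset.sum_mul]
    apply Finset.sum_congr rfl
    intro x hx
    simp only [Finset.mem_filter] at hx
    rw [hx.2]
  intro shat a
  rw [← key]
end

section
/- Lifted MDP equivalence of policy values: under the same state-abstraction setup (φ : Ŝ → S surjective, lifted kernel and reward), for any stationary policy π : S → A (lifted to Ŝ via π̂(ŝ) = π(φ(ŝ))), the policy value functions satisfy Q̂^π̂(ŝ, a) = Q^π(φ(ŝ), a) for all ŝ ∈ Ŝ and a ∈ A, where Q^π is the unique fixed point of the Bellman policy-evaluation operator (T^π Q)(s,a) = r(s,a) + γ Σ_{s'} P(s'|s,a) Q(s', π(s')). -/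
theorem stmt_11 {S Shat A : Type} [Fintype S] [Fintype Shat] [Fintype A]
    [Nonempty S] [Nonempty Shat] [Nonempty A] [DecidableEq S]
    (φ : Shat → S) (hφ : Function.Surjective φ)
    (γ : ℝ) (hγ0 : 0 ≤ γ) (hγ1 : γ < 1)
    (P : S × A → S → ℝ) (Phat : Shat × A → Shat → ℝ)
    (r : S × A → ℝ) (rhat : Shat × A → ℝ)
    (hP0 : ∀ sa s', 0 ≤ P sa s') (hP1 : ∀ sa, ∑ s', P sa s' = 1)
    (hPhat0 : ∀ sa s', 0 ≤ Phat sa s') (hPhat1 : ∀ sa, ∑ s', Phat sa s' = 1)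
    (hlift : ∀ (shat : Shat) (a : A) (s' : S),
      ∑ shat' ∈ Finset.univ.filter (fun shat' => φ shat' = s'), Phat (shat, a) shat' =
        P (φ shat, a) s')
    (hr : ∀ (shat : Shat) (a : A), rhat (shat, a) = r (φ shat, a))
    (π : S → A) (πhat : Shat → A) (hπ : ∀ shat, πhat shat = π (φ shat))
    (Qπ : S × A → ℝ) (Qπhat : Shat × A → ℝ)
    (hQπ : ∀ s a, Qπ (s, a) = r (s, a) + γ * ∑ s', P (s, a) s' * Qπ (s', π s'))
    (hQπuniq : ∀ Q' : S × A → ℝ,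
      (∀ s a, Q' (s, a) = r (s, a) + γ * ∑ s', P (s, a) s' * Q' (s', π s')) → Q' = Qπ)
    (hQπhat : ∀ shat a, Qπhat (shat, a) = rhat (shat, a) +
      γ * ∑ shat', Phat (shat, a) shat' * Qπhat (shat', πhat shat'))
    (hQπhatuniq : ∀ Q' : Shat × A → ℝ,
      (∀ shat a, Q' (shat, a) = rhat (shat, a) +
        γ * ∑ shat', Phat (shat, a) shat' * Q' (shat', πhat shat')) → Q' = Qπhat) :
    ∀ (shat : Shat) (a : A), Qπhat (shat, a) = Qπ (φ shat, a) := by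
  have key : (fun p : Shat × A => Qπ (φ p.1, p.2)) = Qπhat := by
    apply hQπhatuniq
    intro shat a
    rw [hQπ, hr]
    congr 1
    congr 1
    rw [← Finset.sum_fiberwise_of_maps_to (g := φ) (fun x _ => Finset.mem_univ (φ x))]
    apply Finset.sum_congr rfl
    intro s' _
    rw [show (∑ i ∈ Finset.filter (fun i => φ i = s') Finset.univ,
        Phat (shat, a) i * Qπ (φ i, πhat i)) =
        ∑ i ∈ Finset.filter (fun i => φ i = s') Finset.univ,
        Phat (shat, a) i * Qπ (s', π s') from Finset.sum_congr rfl fun i hi => by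
          simp only [Finset.mem_filter] at hi
          rw [hπ, hi.2]]
    rw [← Finset.sum_mul, hlift]
  intro shat a
  exact (congrFun key (shat, a)).symm
end
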